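/- Let 𝒫 = ∏_{i=1}^r B(F_i), 𝒬 = {y ∈ ℝ^{nr} : Sy = 0}, let v be the projection of the origin onto the closed convex set 𝒬 − 𝒫, let 𝒬' = 𝒬 − v, and let E = {p ∈ 𝒫 : d(p, 𝒬) = d(𝒫, 𝒬)}. Then for any y ∈ ℝ^{nr} and any p ∈ E, d(y, 𝒬') = ‖S(y − p)‖. -/

import Mathlib

open scoped RealInnerProductSpace Pointwise

noncomputable section

/-- A set function on the ground set `V = {1,…,n}` (modeled as `Fin n`) is submodular if
`F(A ∩ B) + F(A ∪ B) ≤ F(A) + F(B)` for all `A, B ⊆ V`. -/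
def Submodular {n : ℕ} (F : Finset (Fin n) → ℝ) : Prop :=
  ∀ A B : Finset (Fin n), F (A ∩ B) + F (A ∪ B) ≤ F A + F B

/-- The base polytope `B(F) = {w ∈ ℝⁿ | ∀ A ⊆ V, w(A) ≤ F(A), and w(V) = F(V)}`. -/
def basePolytope (n : ℕ) (F : Finset (Fin n) → ℝ) : Set (EuclideanSpace ℝ (Fin n)) :=
  {w | (∀ A : Finset (Fin n), ∑ i ∈ A, w i ≤ F A) ∧ (∑ i, w i = F Finset.univ)}

/-- `ℝ^{nr}` with the Euclidean norm, written in `r` blocks of `n` coordinates. -/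
abbrev Vec (n r : ℕ) := PiLp 2 (fun _ : Fin r => EuclideanSpace ℝ (Fin n))

/-- The feasible set `𝒴 = ∏ᵢ B(Fᵢ)` of (Prox-DSM). -/
def feas (n r : ℕ) (F : Fin r → Finset (Fin n) → ℝ) : Set (Vec n r) :=
  {y | ∀ i, y i ∈ basePolytope n (F i)}

/-- The objective `g(y) = ‖∑ᵢ y⁽ⁱ⁾‖²` of (Prox-DSM). -/
def g (n r : ℕ) (y : Vec n r) : ℝ := ‖∑ i, y i‖ ^ 2

/-- The `i`-th block of the gradient of `g`: `∇ᵢ g(y) = 2 ∑ⱼ y⁽ʲ⁾` (the same for every `i`). -/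
def gradBlock (n r : ℕ) (y : Vec n r) : EuclideanSpace ℝ (Fin n) := (2 : ℝ) • ∑ j, y j

/-- The full gradient `∇g(y) ∈ ℝ^{nr}`, whose every block equals `2 ∑ⱼ y⁽ʲ⁾`. -/
def gradg (n r : ℕ) (y : Vec n r) : Vec n r := WithLp.toLp 2 (fun _ => gradBlock n r y)

/-- `y` is an optimal solution of (Prox-DSM). -/
def IsOptimal (n r : ℕ) (F : Fin r → Finset (Fin n) → ℝ) (y : Vec n r) : Prop :=
  y ∈ feas n r F ∧ ∀ z ∈ feas n r F, g n r y ≤ g n r z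

/-- The linear map `S = (1/√r)[Iₙ Iₙ ⋯ Iₙ]`, i.e. `S y = (1/√r) ∑ᵢ y⁽ⁱ⁾`. -/
def Smap (n r : ℕ) (y : Vec n r) : EuclideanSpace ℝ (Fin n) := (Real.sqrt r)⁻¹ • ∑ i, y i

/-- Distance between two sets: `d(K₁, K₂) = inf{‖k₁ - k₂‖ : k₁ ∈ K₁, k₂ ∈ K₂}`. -/
def setDist {E : Type*} [PseudoMetricSpace E] (A B : Set E) : ℝ :=
  sInf ((fun p : E × E => dist p.1 p.2) '' (A ×ˢ B))

/-!
The adjoint `S*x = (1/√r)(x, …, x)` is an isometric right inverse of `S`, so the distance from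
`y` to a fibre `{z | S z = c}` is `‖S y - c‖`. In particular `d(p, 𝒬) = ‖S p‖` for `p ∈ 𝒫`, and
`-S*S p = (p - S*S p) - p ∈ 𝒬 - 𝒫` has norm `‖S p‖`. For `p ∈ E` this is
`d(𝒫, 𝒬) ≤ ‖v‖`, so by uniqueness of the minimum-norm point of a convex set `v = -S*S p`.
Hence `𝒬' = 𝒬 - v = {z | S z = S p}`, and the fibre formula gives `d(y, 𝒬') = ‖S(y - p)‖`.
-/

theorem Convex.eq_of_norm_le_of_forall_norm_le {E : Type*} [NormedAddCommGroup E]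
    [NormedSpace ℝ E] [StrictConvexSpace ℝ E] {K : Set E} (hK : Convex ℝ K) {v w : E}
    (hv : v ∈ K) (hvmin : ∀ u ∈ K, ‖v‖ ≤ ‖u‖) (hw : w ∈ K) (hwv : ‖w‖ ≤ ‖v‖) : w = v := by
  by_contra hne
  have hmid : (1 / 2 : ℝ) • w + (1 / 2 : ℝ) • v ∈ K :=
    hK hw hv (by norm_num) (by norm_num) (by norm_num)
  exact (hvmin _ hmid).not_gt <|
    norm_combo_lt_of_ne (a := 1 / 2) (b := 1 / 2) hwv le_rfl hne (by norm_num) (by norm_num)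
      (by norm_num)

theorem setDist_le_dist {E : Type*} [PseudoMetricSpace E] {A B : Set E} {a b : E}
    (ha : a ∈ A) (hb : b ∈ B) : setDist A B ≤ dist a b :=
  csInf_le ⟨0, by rintro _ ⟨_, _, rfl⟩; exact dist_nonneg⟩ ⟨(a, b), ⟨ha, hb⟩, rfl⟩

section Fiber

variable {E F : Type*} [SeminormedAddCommGroup E] [SeminormedAddCommGroup F]

theorem infDist_fiber_eq_of_rightInverse (S : E →+ F) (A : F → E) (hSA : ∀ x, S (A x) = x)
    (hA : ∀ x, ‖A x‖ ≤ ‖x‖) (hS : ∀ z, ‖S z‖ ≤ ‖z‖) (y : E) (c : F) :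
    Metric.infDist y {z | S z = c} = ‖S y - c‖ := by
  have hq : y - A (S y - c) ∈ {z | S z = c} := by simp [hSA]
  refine le_antisymm ?_ ((Metric.le_infDist ⟨_, hq⟩).2 fun z hz => ?_)
  · calc Metric.infDist y {z | S z = c} ≤ dist y (y - A (S y - c)) :=
          Metric.infDist_le_dist_of_mem hq
      _ ≤ ‖S y - c‖ := by simpa [dist_eq_norm] using hA _
  · calc ‖S y - c‖ = ‖S (y - z)‖ := by rw [map_sub, hz]
      _ ≤ dist y z := (hS _).trans_eq (dist_eq_norm _ _).symm

theorem image_sub_const_fiber (S : E →+ F) (v : E) (c : F) :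
    (fun y => y - v) '' {z | S z = c} = {z | S z = c - S v} := by
  ext z
  constructor
  · rintro ⟨z, hz : S z = c, rfl⟩
    show S (z - v) = c - S v
    rw [map_sub, hz]
  · intro (hz : S z = c - S v)
    exact ⟨z + v, show S (z + v) = c by rw [map_add, hz, sub_add_cancel], add_sub_cancel_right z v⟩

end Fiber

variable {n r : ℕ}

def smapLinear (n r : ℕ) : Vec n r →ₗ[ℝ] EuclideanSpace ℝ (Fin n) where
  toFun := Smap n r
  map_add' y z := by simp [Smap, Finset.sum_add_distrib, smul_add]
  map_smul' a y := by simp [Smap, Finset.smul_sum, smul_comm a]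

@[simp]
theorem smapLinear_apply (y : Vec n r) : smapLinear n r y = Smap n r y := rfl

theorem Smap_sub (y z : Vec n r) : Smap n r (y - z) = Smap n r y - Smap n r z :=
  map_sub (smapLinear n r) y z

theorem Smap_neg (y : Vec n r) : Smap n r (-y) = -Smap n r y :=
  map_neg (smapLinear n r) y

def smapAdjoint (n r : ℕ) (x : EuclideanSpace ℝ (Fin n)) : Vec n r :=
  WithLp.toLp 2 fun _ => (Real.sqrt r)⁻¹ • x

theorem inner_Smap_left (z : Vec n r) (x : EuclideanSpace ℝ (Fin n)) :
    ⟪Smap n r z, x⟫ = ⟪z, smapAdjoint n r x⟫ := by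
  calc ⟪Smap n r z, x⟫ = ∑ i, (Real.sqrt r)⁻¹ * ⟪z i, x⟫ := by
        rw [Smap, real_inner_smul_left, sum_inner, Finset.mul_sum]
    _ = ⟪z, smapAdjoint n r x⟫ := by
        rw [PiLp.inner_apply]
        simp only [smapAdjoint, PiLp.toLp_apply, real_inner_smul_right]

theorem Smap_smapAdjoint (hr : r ≠ 0) (x : EuclideanSpace ℝ (Fin n)) :
    Smap n r (smapAdjoint n r x) = x := by
  have hs : Real.sqrt r ≠ 0 := by positivity
  have hsq : Real.sqrt r ^ 2 = r := Real.sq_sqrt (Nat.cast_nonneg r)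
  simp only [Smap, smapAdjoint, PiLp.toLp_apply, Finset.sum_const, Finset.card_univ,
    Fintype.card_fin, ← Nat.cast_smul_eq_nsmul ℝ, smul_smul]
  rw [← hsq]
  field_simp
  simp [hr]

theorem norm_smapAdjoint (hr : r ≠ 0) (x : EuclideanSpace ℝ (Fin n)) :
    ‖smapAdjoint n r x‖ = ‖x‖ := by
  have hsq : Real.sqrt r ^ 2 = r := Real.sq_sqrt (Nat.cast_nonneg r)
  have hr' : (r : ℝ) ≠ 0 := by exact_mod_cast hr
  have h : ‖smapAdjoint n r x‖ ^ 2 = ‖x‖ ^ 2 := by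
    simp only [PiLp.norm_sq_eq_of_L2, smapAdjoint, norm_smul, mul_pow,
      norm_inv, Real.norm_eq_abs, abs_of_nonneg (Real.sqrt_nonneg _), inv_pow, hsq,
      Finset.sum_const, Finset.card_univ, Fintype.card_fin, nsmul_eq_mul]
    field_simp
  exact (sq_eq_sq₀ (norm_nonneg _) (norm_nonneg _)).1 h

theorem norm_Smap_le (hr : r ≠ 0) (z : Vec n r) : ‖Smap n r z‖ ≤ ‖z‖ := by
  have h : ‖Smap n r z‖ ^ 2 ≤ ‖z‖ * ‖Smap n r z‖ := by
    calc ‖Smap n r z‖ ^ 2 = ⟪z, smapAdjoint n r (Smap n r z)⟫ := by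
          rw [← inner_Smap_left, real_inner_self_eq_norm_sq]
      _ ≤ ‖z‖ * ‖Smap n r z‖ := by
          simpa [norm_smapAdjoint hr] using real_inner_le_norm z (smapAdjoint n r (Smap n r z))
  nlinarith [norm_nonneg (Smap n r z), norm_nonneg z]

theorem infDist_Smap_fiber (hr : r ≠ 0) (y : Vec n r) (c : EuclideanSpace ℝ (Fin n)) :
    Metric.infDist y {z | Smap n r z = c} = ‖Smap n r y - c‖ :=
  infDist_fiber_eq_of_rightInverse (smapLinear n r).toAddMonoidHom (smapAdjoint n r)
    (Smap_smapAdjoint hr) (fun x => (norm_smapAdjoint hr x).le) (norm_Smap_le hr) y c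

theorem neg_smapAdjoint_Smap_mem {P : Set (Vec n r)} (hr : r ≠ 0) {p : Vec n r} (hp : p ∈ P) :
    -smapAdjoint n r (Smap n r p) ∈ {z | Smap n r z = 0} - P := by
  refine Set.mem_sub.2 ⟨p - smapAdjoint n r (Smap n r p), ?_, p, hp, sub_sub_cancel_left _ _⟩
  change Smap n r _ = 0
  rw [Smap_sub, Smap_smapAdjoint hr, sub_self]

theorem convex_basePolytope (n : ℕ) (F : Finset (Fin n) → ℝ) :
    Convex ℝ (basePolytope n F) := by
  have hlin (A : Finset (Fin n)) :
      IsLinearMap ℝ fun w : EuclideanSpace ℝ (Fin n) => ∑ i ∈ A, w i :=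
    ⟨by simp [Finset.sum_add_distrib], by simp [Finset.mul_sum]⟩
  simp only [basePolytope, Set.ofPred_and, Set.ofPred_forall]
  exact (convex_iInter fun A => convex_halfSpace_le (hlin A) _).inter
    (convex_hyperplane (hlin _) _)

theorem convex_feas (n r : ℕ) (F : Fin r → Finset (Fin n) → ℝ) : Convex ℝ (feas n r F) := by
  simp only [feas, Set.ofPred_forall]
  exact convex_iInter fun i => (convex_basePolytope n (F i)).is_linear_preimage
    (f := fun y : Vec n r => y i) ⟨fun _ _ => rfl, fun _ _ => rfl⟩

theorem convex_Smap_fiber_zero (n r : ℕ) : Convex ℝ {y : Vec n r | Smap n r y = 0} :=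
  (LinearMap.ker (smapLinear n r)).convex

theorem statement16_general (n r : ℕ) (hr : 1 ≤ r)
    (F : Fin r → Finset (Fin n) → ℝ)
    (P : Set (Vec n r)) (hP : P = feas n r F)
    (Q : Set (Vec n r)) (hQ : Q = {y : Vec n r | Smap n r y = 0})
    (v : Vec n r) (hv : v ∈ Q - P) (hvmin : ∀ w ∈ Q - P, ‖v‖ ≤ ‖w‖)
    (Q' : Set (Vec n r)) (hQ' : Q' = (fun y => y - v) '' Q)
    (E : Set (Vec n r)) (hE : E = {p ∈ P | Metric.infDist p Q = setDist P Q}) :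
    ∀ y : Vec n r, ∀ p ∈ E, Metric.infDist y Q' = ‖Smap n r (y - p)‖ := by
  intro y p hp
  subst hP hQ hQ' hE
  obtain ⟨hpP, hpd⟩ := hp
  have hr0 : r ≠ 0 := by omega
  obtain ⟨q₀, hq₀, p₀, hp₀, hv₀⟩ := Set.mem_sub.1 hv
  have hw := neg_smapAdjoint_Smap_mem hr0 hpP
  have hwv : ‖-smapAdjoint n r (Smap n r p)‖ ≤ ‖v‖ := by
    calc ‖-smapAdjoint n r (Smap n r p)‖ = Metric.infDist p {z | Smap n r z = 0} := by
          rw [norm_neg, norm_smapAdjoint hr0, infDist_Smap_fiber hr0, sub_zero]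
      _ ≤ dist p₀ q₀ := hpd ▸ setDist_le_dist hp₀ hq₀
      _ = ‖v‖ := by rw [dist_eq_norm', hv₀]
  have hv_eq := ((convex_Smap_fiber_zero n r).sub
    (convex_feas n r F)).eq_of_norm_le_of_forall_norm_le hv hvmin hw hwv
  have hSv : Smap n r v = -Smap n r p := by
    rw [← hv_eq, Smap_neg, Smap_smapAdjoint hr0]
  have hQ' : (fun z => z - v) '' {z | Smap n r z = 0} = {z | Smap n r z = Smap n r p} := by
    simpa [hSv] using image_sub_const_fiber (smapLinear n r).toAddMonoidHom v 0
  rw [hQ', infDist_Smap_fiber hr0, Smap_sub]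

/-- With `𝒫 = ∏ᵢ B(Fᵢ)`, `𝒬 = {y | Sy = 0}`, `v` the minimum-norm point
of `𝒬 - 𝒫`, `𝒬' = 𝒬 - v` and `E = {p ∈ 𝒫 | d(p, 𝒬) = d(𝒫, 𝒬)}`: for any `y ∈ ℝ^{nr}`
and any `p ∈ E`, `d(y, 𝒬') = ‖S(y - p)‖`. -/
theorem statement16 (n r : ℕ) (hn : 1 ≤ n) (hr : 1 ≤ r)
    (F : Fin r → Finset (Fin n) → ℝ)
    (hsub : ∀ i, Submodular (F i)) (hnorm : ∀ i, F i ∅ = 0)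
    (P : Set (Vec n r)) (hP : P = feas n r F)
    (Q : Set (Vec n r)) (hQ : Q = {y : Vec n r | Smap n r y = 0})
    (v : Vec n r) (hv : v ∈ Q - P) (hvmin : ∀ w ∈ Q - P, ‖v‖ ≤ ‖w‖)
    (Q' : Set (Vec n r)) (hQ' : Q' = (fun y => y - v) '' Q)
    (E : Set (Vec n r)) (hE : E = {p ∈ P | Metric.infDist p Q = setDist P Q}) :
    ∀ y : Vec n r, ∀ p ∈ E, Metric.infDist y Q' = ‖Smap n r (y - p)‖ :=
  statement16_general n r hr F P hP Q hQ v hv hvmin Q' hQ' E hE
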